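/- Let k ≥ 1 and let x ∈ W^{k,2}([0,1],ℝ^{2n}) satisfy the boundary conditions ∂_t^ℓ x(0), ∂_t^ℓ x(1) ∈ ℝⁿ for all even ℓ with 0 ≤ ℓ ≤ k−1 and ∂_t^ℓ x(0), ∂_t^ℓ x(1) ∈ iℝⁿ for all odd ℓ with 0 ≤ ℓ ≤ k−1. Define the loop γ_x : S¹(2) = ℝ/2ℤ → ℝ^{2n} by γ_x(t) = x(t) for t ∈ [0,1] and γ_x(t) = conj(x(2−t)) for t ∈ [1,2], where conj is complex conjugation on ℂⁿ ≅ ℝ^{2n}. Then γ_x ∈ W^{k,2}(S¹(2),ℝ^{2n}) and γ_x(2−t) = conj(γ_x(t)) for all t ∈ [0,2]. -/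

import Mathlib

open MeasureTheory Set

namespace NLGF

/-! ### Paths `[0,1] → ℝ^{2n} ≅ ℂⁿ` with Lagrangian boundary conditions on `ℝⁿ` -/

/-- `ℂⁿ ≅ ℝ^{2n}`, with real part `ℝⁿ`. -/
abbrev Cn (n : ℕ) := EuclideanSpace ℂ (Fin n)

/-- `v` lies in the real part `ℝⁿ ⊆ ℂⁿ`. -/
def RealVec (n : ℕ) (v : Cn n) : Prop := ∀ l, (v l).im = 0

/-- `v` lies in the imaginary part `iℝⁿ ⊆ ℂⁿ`. -/
def ImagVec (n : ℕ) (v : Cn n) : Prop := ∀ l, (v l).re = 0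

/-- Complex conjugation (reflection at `ℝⁿ`) on `ℂⁿ`. -/
noncomputable def conjCn (n : ℕ) (v : Cn n) : Cn n := WithLp.toLp 2 (fun l => starRingEnd ℂ (v l))

/-- The Sobolev space `W^{k,2}([0,1], ℝ^{2n})`: `x` is (for `k ≥ 1`) an iterated
antiderivative of an `L²` function. -/
def WkPath (n : ℕ) : ℕ → (ℝ → Cn n) → Prop
  | 0, x => MemLp x 2 (volume.restrict (Ioo (0:ℝ) 1))
  | (k + 1), x => ∃ d : ℝ → Cn n, WkPath n k d ∧
      ∀ t ∈ Icc (0:ℝ) 1, x t = x 0 + ∫ s in (0:ℝ)..t, d s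

/-- The boundary conditions defining `W^{k,2}_{bc}([0,1],ℝ^{2n})`:
`∂ₜ^ℓ x(0), ∂ₜ^ℓ x(1) ∈ ℝⁿ` for even `ℓ ≤ k-1` and `∂ₜ^ℓ x(0), ∂ₜ^ℓ x(1) ∈ iℝⁿ` for odd
`ℓ ≤ k-1`. -/
def BC (n k : ℕ) (x : ℝ → Cn n) : Prop :=
  ∀ l < k,
    (Even l → RealVec n (iteratedDerivWithin l x (Icc (0:ℝ) 1) 0) ∧
      RealVec n (iteratedDerivWithin l x (Icc (0:ℝ) 1) 1)) ∧
    (Odd l → ImagVec n (iteratedDerivWithin l x (Icc (0:ℝ) 1) 0) ∧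
      ImagVec n (iteratedDerivWithin l x (Icc (0:ℝ) 1) 1))

end NLGF

namespace NLGF

/-- The loop `γ_x : ℝ/2ℤ → ℝ^{2n}` obtained by reflecting the path `x` at `ℝⁿ`:
`γ_x(t) = x(t)` for `t ∈ [0,1]` and `γ_x(t) = conj(x(2-t))` for `t ∈ [1,2]`, extended
`2`-periodically. -/
noncomputable def reflLoop (n : ℕ) (x : ℝ → Cn n) : ℝ → Cn n := fun t =>
  let s := t - 2 * ⌊t / 2⌋
  if s ≤ 1 then x s else conjCn n (x (2 - s))

/-- The Sobolev space `W^{k,2}(S¹(2), ℝ^{2n})` of loops on the circle `S¹(2) = ℝ/2ℤ` of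
length `2`. -/
def WkCirc (n : ℕ) : ℕ → (ℝ → Cn n) → Prop
  | 0, g => Function.Periodic g 2 ∧ MemLp g 2 (volume.restrict (Ioo (0:ℝ) 2))
  | (k + 1), g => Function.Periodic g 2 ∧ ∃ d : ℝ → Cn n, WkCirc n k d ∧
      ∀ t : ℝ, g t = g 0 + ∫ s in (0:ℝ)..t, d s

end NLGF

/-! Reflecting a path `x` on `[0,1]` through a linear map `R` gives the `2`-periodic loop
`γ = x` on `[0,1]`, `γ(t) = R x(2 - t)` on `[1,2]`. Since `d/dt R x(2 - t) = -R x'(2 - t)`, the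
derivative of this loop is the loop obtained by reflecting `x'` through `-R`, provided the two halves of `γ` match at
`t = 1` and `t = 2`, i.e. `R` fixes `x(0)` and `x(1)`. Iterating, the `l`-th derivative of `γ` is
the reflection of `x⁽ˡ⁾` through `(-1)ˡ R`, and for `R = conj` the boundary conditions say exactly
that `(-1)ˡ conj` fixes `x⁽ˡ⁾(0)` and `x⁽ˡ⁾(1)`. Since the Sobolev spaces are defined through
primitives, each differentiation step is the identity `γ(t) = x(0) + ∫₀ᵗ γ'`: it is checked on
`[0,2]` by splitting at `1`, and holds on all of `ℝ` because both sides are `2`-periodic (the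
integral of `γ'` over a period is `x(0) - x(0) = 0`). -/

open Function intervalIntegral

theorem MeasureTheory.MemLp.restrict_union {α E : Type*} [MeasurableSpace α]
    [NormedAddCommGroup E] {μ : Measure α} {p : ENNReal} {f : α → E} {s t : Set α}
    (hs : MeasurableSet s) (hfs : MemLp f p (μ.restrict s)) (hft : MemLp f p (μ.restrict t)) :
    MemLp f p (μ.restrict (s ∪ t)) := by
  classical
  have hsc : (μ.restrict (s ∪ t)).restrict sᶜ ≤ μ.restrict t := by
    rw [Measure.restrict_restrict hs.compl]
    exact Measure.restrict_mono (fun a ha => ha.2.resolve_left ha.1) le_rfl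
  have := MemLp.piecewise hs
    (by rwa [Measure.restrict_restrict hs, inter_eq_left.2 subset_union_left])
    (hft.mono_measure hsc)
  rwa [piecewise_same] at this

section General

variable {E : Type*} [NormedAddCommGroup E] [NormedSpace ℝ E] {x d : ℝ → E} {a b : ℝ}

theorem Function.Periodic.eq_of_eqOn_Ico₀ {α β : Type*} [AddCommGroup α] [LinearOrder α]
    [IsOrderedAddMonoid α] [Archimedean α] {f g : α → β} {c : α} (hf : Periodic f c)
    (hg : Periodic g c) (hc : 0 < c) (h : EqOn f g (Ico 0 c)) : f = g := by
  funext t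
  have hfg : Periodic (fun t => (f t, g t)) c := fun t => by simp only [hf t, hg t]
  obtain ⟨s, hs, hst⟩ := hfg.exists_mem_Ico₀ hc t
  obtain ⟨hft, hgt⟩ := Prod.mk.inj hst
  rw [hft, hgt, h hs]

theorem Function.Periodic.primitive {f : ℝ → E} {T : ℝ} (hf : Periodic f T) (hT : T ≠ 0)
    (hint : IntervalIntegrable f volume 0 T) (hzero : ∫ s in 0..T, f s = 0) :
    Periodic (fun t => ∫ s in 0..t, f s) T := fun t => by
  simp only [hf.intervalIntegral_add_eq_add 0 t (hf.intervalIntegrable₀ hT hint), zero_add,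
    hzero, add_zero]

theorem continuousOn_of_eq_add_integral (hab : a ≤ b) (hd : IntervalIntegrable d volume a b)
    (hx : ∀ t ∈ Icc a b, x t = x a + ∫ s in a..t, d s) : ContinuousOn x (Icc a b) := by
  have hprim :=
    (continuousOn_const (c := x a)).add (continuousOn_primitive_interval' hd left_mem_uIcc)
  rw [uIcc_of_le hab] at hprim
  exact hprim.congr hx

theorem derivWithin_eqOn_of_eq_add_integral [CompleteSpace E] (hab : a < b)
    (hd : ContinuousOn d (Icc a b))
    (hx : ∀ t ∈ Icc a b, x t = x a + ∫ s in a..t, d s) :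
    EqOn (derivWithin x (Icc a b)) d (Icc a b) := by
  intro t ht
  have : Fact (t ∈ Icc a b) := ⟨ht⟩
  have hdt : IntervalIntegrable d volume a t :=
    (hd.mono (Icc_subset_Icc_right ht.2)).intervalIntegrable_of_Icc ht.1
  have hprim : HasDerivWithinAt (fun u => x a + ∫ s in a..u, d s) (d t) (Icc a b) t :=
    (integral_hasDerivWithinAt_right hdt
      ⟨Icc a b, self_mem_nhdsWithin, hd.aestronglyMeasurable measurableSet_Icc⟩
      (hd t ht)).const_add _
  exact (hprim.congr hx (hx t ht)).derivWithin (uniqueDiffOn_Icc hab t ht)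

theorem iteratedDerivWithin_succ_eqOn_of_eq_add_integral [CompleteSpace E] (hab : a < b)
    (hd : ContinuousOn d (Icc a b))
    (hx : ∀ t ∈ Icc a b, x t = x a + ∫ s in a..t, d s) (l : ℕ) :
    EqOn (iteratedDerivWithin (l + 1) x (Icc a b)) (iteratedDerivWithin l d (Icc a b))
      (Icc a b) := by
  rw [iteratedDerivWithin_succ']
  exact iteratedDerivWithin_congr (derivWithin_eqOn_of_eq_add_integral hab hd hx)

end General

namespace NLGF

section Reflect

variable {E : Type*} [NormedAddCommGroup E] [NormedSpace ℝ E] (R : E →L[ℝ] E) {x d : ℝ → E}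
  {t : ℝ}

noncomputable def reflect (x : ℝ → E) : ℝ → E := fun t =>
  let s := t - 2 * ⌊t / 2⌋
  if s ≤ 1 then x s else R (x (2 - s))

theorem reflect_periodic (x : ℝ → E) : Periodic (reflect R x) 2 := fun t => by
  have : ⌊(t + 2) / 2⌋ = ⌊t / 2⌋ + 1 := by rw [add_div, div_self two_ne_zero, Int.floor_add_one]
  simp only [reflect, this, Int.cast_add, Int.cast_one]
  ring_nf

theorem reflect_of_mem_Icc (ht : t ∈ Icc 0 1) : reflect R x t = x t := by
  have : ⌊t / 2⌋ = 0 := Int.floor_eq_zero_iff.2 ⟨by linarith [ht.1], by linarith [ht.2]⟩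
  simp [reflect, this, ht.2]

theorem reflect_of_mem_Ioo (ht : t ∈ Ioo 1 2) : reflect R x t = R (x (2 - t)) := by
  have : ⌊t / 2⌋ = 0 := Int.floor_eq_zero_iff.2 ⟨by linarith [ht.1], by linarith [ht.2]⟩
  simp [reflect, this, ht.1]

theorem reflect_two (x : ℝ → E) : reflect R x 2 = x 0 := by
  simp [reflect]

theorem reflect_of_mem_Ioc (h0 : R (x 0) = x 0) (ht : t ∈ Ioc 1 2) :
    reflect R x t = R (x (2 - t)) := by
  rcases ht.2.eq_or_lt with rfl | h2
  · rw [reflect_two, sub_self, h0]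
  · exact reflect_of_mem_Ioo R ⟨ht.1, h2⟩

theorem reflect_two_sub (hR : Involutive R) (h0 : R (x 0) = x 0) (h1 : R (x 1) = x 1)
    (ht : t ∈ Icc 0 2) : reflect R x (2 - t) = R (reflect R x t) := by
  rcases lt_or_ge t 1 with ht1 | ht1
  · rcases ht.1.eq_or_lt with rfl | ht0
    · rw [sub_zero, reflect_two, reflect_of_mem_Icc R ⟨le_rfl, zero_le_one⟩, h0]
    · rw [reflect_of_mem_Ioo R ⟨by linarith, by linarith⟩, reflect_of_mem_Icc R ⟨ht.1, ht1.le⟩,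
        sub_sub_cancel]
  · rw [reflect_of_mem_Icc R ⟨by linarith [ht.2], by linarith⟩]
    rcases ht1.eq_or_lt with rfl | ht1
    · rw [reflect_of_mem_Icc R ⟨zero_le_one, le_rfl⟩, h1]; norm_num
    · rw [reflect_of_mem_Ioc R h0 ⟨ht1, ht.2⟩, hR]

theorem intervalIntegrable_reflect (hd : IntervalIntegrable d volume 0 1) (a b : ℝ) :
    IntervalIntegrable (reflect R d) volume a b := by
  have h01 : IntervalIntegrable (reflect R d) volume 0 1 :=
    hd.congr_uIoo fun _ hs =>
      (reflect_of_mem_Icc R (Ioo_subset_Icc_self (uIoo_of_le (zero_le_one' ℝ) ▸ hs))).symm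
  have hR : IntervalIntegrable (fun s => R (d (2 - s))) volume 1 2 := by
    have h := (hd.comp_sub_left 2).symm
    rw [sub_zero, show (2 : ℝ) - 1 = 1 by norm_num, intervalIntegrable_iff] at h
    rw [intervalIntegrable_iff]
    exact R.integrable_comp h
  have h12 : IntervalIntegrable (reflect R d) volume 1 2 :=
    hR.congr_uIoo fun _ hs =>
      (reflect_of_mem_Ioo R (uIoo_of_le (one_le_two' (α := ℝ)) ▸ hs)).symm
  exact (reflect_periodic R d).intervalIntegrable₀ two_ne_zero (h01.trans h12) a b

theorem integral_reflect_of_mem_Icc (ht : t ∈ Icc 0 1) :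
    ∫ s in 0..t, reflect R d s = ∫ s in 0..t, d s :=
  integral_congr fun _ hs => by
    rw [uIcc_of_le ht.1] at hs
    exact reflect_of_mem_Icc R ⟨hs.1, hs.2.trans ht.2⟩

theorem integral_reflect_of_mem_Icc_one_two [CompleteSpace E]
    (hd : IntervalIntegrable d volume 0 1) (ht : t ∈ Icc 1 2) :
    ∫ s in 1..t, reflect R d s = R (∫ s in (2 - t)..1, d s) := by
  have hdt : IntervalIntegrable d volume (2 - t) 1 :=
    hd.mono_set (uIcc_subset_uIcc (mem_uIcc_of_le (by linarith [ht.2]) (by linarith [ht.1]))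
      right_mem_uIcc)
  have hdt' : IntervalIntegrable (fun s => d (2 - s)) volume 1 t := by
    have h := (hdt.comp_sub_left 2).symm
    rwa [sub_sub_cancel, show (2 : ℝ) - 1 = 1 by norm_num] at h
  calc ∫ s in 1..t, reflect R d s = ∫ s in 1..t, R (d (2 - s)) :=
        integral_congr_uIoo fun _ hs => by
          rw [uIoo_of_le ht.1] at hs
          exact reflect_of_mem_Ioo R ⟨hs.1, hs.2.trans_le ht.2⟩
    _ = R (∫ s in 1..t, d (2 - s)) := R.intervalIntegral_comp_comm hdt'
    _ = R (∫ s in (2 - t)..1, d s) := by rw [integral_comp_sub_left]; norm_num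

theorem reflect_eq_add_integral_of_mem_Icc [CompleteSpace E]
    (hd : IntervalIntegrable d volume 0 1) (hx : ∀ t ∈ Icc 0 1, x t = x 0 + ∫ s in 0..t, d s)
    (h0 : R (x 0) = x 0) (h1 : R (x 1) = x 1) (ht : t ∈ Icc 0 2) :
    reflect R x t = x 0 + ∫ s in 0..t, reflect (-R) d s := by
  rcases le_or_gt t 1 with ht1 | ht1
  · rw [reflect_of_mem_Icc R ⟨ht.1, ht1⟩, integral_reflect_of_mem_Icc (-R) ⟨ht.1, ht1⟩,
      hx t ⟨ht.1, ht1⟩]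
  have hmem : 2 - t ∈ Icc 0 1 := ⟨by linarith [ht.2], by linarith⟩
  have hsub : ∫ s in (2 - t)..1, d s = x 1 - x (2 - t) := by
    rw [hx 1 ⟨zero_le_one, le_rfl⟩, hx (2 - t) hmem, add_sub_add_left_eq_sub,
      integral_interval_sub_left hd (hd.mono_set (uIcc_subset_uIcc left_mem_uIcc
        (mem_uIcc_of_le hmem.1 hmem.2)))]
  rw [← integral_add_adjacent_intervals (intervalIntegrable_reflect (-R) hd 0 1)
      (intervalIntegrable_reflect (-R) hd 1 t),
    integral_reflect_of_mem_Icc (-R) ⟨zero_le_one, le_rfl⟩,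
    integral_reflect_of_mem_Icc_one_two (-R) hd ⟨ht1.le, ht.2⟩, hsub,
    reflect_of_mem_Ioc R h0 ⟨ht1, ht.2⟩, ← add_assoc, ← hx 1 ⟨zero_le_one, le_rfl⟩,
    neg_apply, map_sub, h1]
  abel

theorem reflect_eq_add_integral [CompleteSpace E]
    (hd : IntervalIntegrable d volume 0 1) (hx : ∀ t ∈ Icc 0 1, x t = x 0 + ∫ s in 0..t, d s)
    (h0 : R (x 0) = x 0) (h1 : R (x 1) = x 1) (t : ℝ) :
    reflect R x t = x 0 + ∫ s in 0..t, reflect (-R) d s := by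
  have hzero : ∫ s in 0..2, reflect (-R) d s = 0 := by
    have h2 := reflect_eq_add_integral_of_mem_Icc R hd hx h0 h1 ⟨zero_le_two, le_rfl⟩
    rwa [reflect_two, left_eq_add] at h2
  have hprim := (reflect_periodic (-R) d).primitive two_ne_zero
    (intervalIntegrable_reflect (-R) hd 0 2) hzero
  refine congrFun ((reflect_periodic R x).eq_of_eqOn_Ico₀ (fun u => ?_) two_pos
    fun u hu => reflect_eq_add_integral_of_mem_Icc R hd hx h0 h1 (Ico_subset_Icc_self hu)) t
  simp only [hprim u]

theorem memLp_reflect {p : ENNReal} (hd : MemLp d p (volume.restrict (Ioo 0 1))) :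
    MemLp (reflect R d) p (volume.restrict (Ioo 0 2)) := by
  rw [← Ioc_union_Ioo_eq_Ioo zero_le_one one_lt_two]
  refine MemLp.restrict_union measurableSet_Ioc ?_ ?_
  · rw [← Measure.restrict_congr_set Ioo_ae_eq_Ioc]
    exact hd.ae_eq ((ae_restrict_mem measurableSet_Ioo).mono fun s hs =>
      (reflect_of_mem_Icc R (Ioo_subset_Icc_self hs)).symm)
  · have hmp : MeasurePreserving (fun s : ℝ => 2 - s) (volume.restrict (Ioo 1 2))
        (volume.restrict (Ioo 0 1)) := by
      have h := (Measure.measurePreserving_sub_left volume (2 : ℝ)).restrict_preimage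
        (measurableSet_Ioo (a := 0) (b := 1))
      rwa [preimage_const_sub_Ioo, sub_zero, show (2 : ℝ) - 1 = 1 by norm_num] at h
    exact (R.comp_memLp' (hd.comp_measurePreserving hmp)).ae_eq
      ((ae_restrict_mem measurableSet_Ioo).mono fun s hs => (reflect_of_mem_Ioo R hs).symm)

end Reflect

section BoundaryConditions

variable {E : Type*} [NormedAddCommGroup E] [NormedSpace ℝ E] {R : E →L[ℝ] E} {k : ℕ}
  {x : ℝ → E}

def ReflectionBC (R : E →L[ℝ] E) (k : ℕ) (x : ℝ → E) : Prop :=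
  ∀ l < k, ∀ t ∈ ({0, 1} : Set ℝ),
    ((-1 : ℝ) ^ l • R) (iteratedDerivWithin l x (Icc 0 1) t) = iteratedDerivWithin l x (Icc 0 1) t

theorem ReflectionBC.map_eq (h : ReflectionBC R k x) (hk : 0 < k) {t : ℝ}
    (ht : t ∈ ({0, 1} : Set ℝ)) : R (x t) = x t := by
  simpa using h 0 hk t ht

end BoundaryConditions

section Sobolev

variable {n k : ℕ} {x d : ℝ → Cn n}

theorem WkPath.intervalIntegrable : ∀ {k : ℕ} {x : ℝ → Cn n}, WkPath n k x →
    IntervalIntegrable x volume 0 1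
  | 0, _, hx => (intervalIntegrable_iff_integrableOn_Ioo_of_le zero_le_one).2
      (hx.integrable one_le_two)
  | _ + 1, _, ⟨_, hd, hx⟩ =>
      (continuousOn_of_eq_add_integral zero_le_one hd.intervalIntegrable hx
        ).intervalIntegrable_of_Icc zero_le_one

theorem WkPath.continuousOn (hx : WkPath n (k + 1) x) : ContinuousOn x (Icc 0 1) :=
  let ⟨_, hd, hxd⟩ := hx
  continuousOn_of_eq_add_integral zero_le_one hd.intervalIntegrable hxd

theorem ReflectionBC.of_eq_add_integral {R : Cn n →L[ℝ] Cn n} (hd : WkPath n k d)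
    (hx : ∀ t ∈ Icc 0 1, x t = x 0 + ∫ s in 0..t, d s) (h : ReflectionBC R (k + 1) x) :
    ReflectionBC (-R) k d := by
  intro l hl t ht
  obtain ⟨_, rfl⟩ := Nat.exists_eq_add_of_lt hl
  have ht' : t ∈ Icc (0 : ℝ) 1 := by rcases ht with rfl | rfl <;> simp
  have hderiv := iteratedDerivWithin_succ_eqOn_of_eq_add_integral zero_lt_one hd.continuousOn
    hx l ht'
  rw [← hderiv, smul_neg, ← neg_smul, ← mul_neg_one, ← pow_succ]
  exact h (l + 1) (by omega) t ht

noncomputable def conjL (n : ℕ) : Cn n →L[ℝ] Cn n :=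
  LinearMap.toContinuousLinearMap
    { toFun := conjCn n
      map_add' := fun v w => by ext l; simp [conjCn]
      map_smul' := fun r v => by ext l; simp [conjCn] }

theorem conjL_involutive (n : ℕ) : Involutive (conjL n) := fun v => by
  ext l; simp [conjL, conjCn]

theorem RealVec.conjL_eq {v : Cn n} (h : RealVec n v) : conjL n v = v := by
  ext l; simp [conjL, conjCn, Complex.ext_iff, h l]

theorem ImagVec.conjL_eq {v : Cn n} (h : ImagVec n v) : conjL n v = -v := by
  ext l; simp [conjL, conjCn, Complex.ext_iff, h l]

theorem BC.reflectionBC (h : BC n k x) : ReflectionBC (conjL n) k x := by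
  intro l hl t ht
  rcases Nat.even_or_odd l with he | ho
  · have hv : RealVec n (iteratedDerivWithin l x (Icc 0 1) t) := by
      rcases ht with rfl | rfl
      exacts [((h l hl).1 he).1, ((h l hl).1 he).2]
    rw [he.neg_one_pow, one_smul, hv.conjL_eq]
  · have hv : ImagVec n (iteratedDerivWithin l x (Icc 0 1) t) := by
      rcases ht with rfl | rfl
      exacts [((h l hl).2 ho).1, ((h l hl).2 ho).2]
    rw [ho.neg_one_pow, neg_one_smul, neg_apply, hv.conjL_eq, neg_neg]

theorem wkCirc_reflect {R : Cn n →L[ℝ] Cn n} (hx : WkPath n k x) (hR : ReflectionBC R k x) :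
    WkCirc n k (reflect R x) := by
  induction k generalizing R x with
  | zero => exact ⟨reflect_periodic R x, memLp_reflect R hx⟩
  | succ k ih =>
    obtain ⟨d, hd, hxd⟩ := hx
    refine ⟨reflect_periodic R x, reflect (-R) d, ih hd (hR.of_eq_add_integral hd hxd),
      fun t => ?_⟩
    rw [reflect_of_mem_Icc R ⟨le_rfl, zero_le_one⟩]
    exact reflect_eq_add_integral R hd.intervalIntegrable hxd (hR.map_eq k.succ_pos (by simp))
      (hR.map_eq k.succ_pos (by simp)) t

theorem reflLoop_eq_reflect (x : ℝ → Cn n) : reflLoop n x = reflect (conjL n) x := rfl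

end Sobolev

/-- **Reflection at `ℝⁿ` (from the proof of Lemma 5.4).** Let `k ≥ 1` and let
`x ∈ W^{k,2}([0,1],ℝ^{2n})` satisfy the boundary conditions
`∂ₜ^ℓ x(0), ∂ₜ^ℓ x(1) ∈ ℝⁿ` for even `ℓ ≤ k-1` and `∂ₜ^ℓ x(0), ∂ₜ^ℓ x(1) ∈ iℝⁿ` for odd
`ℓ ≤ k-1`. Then the reflected loop `γ_x` lies in `W^{k,2}(S¹(2),ℝ^{2n})` and satisfies
`γ_x(2-t) = conj(γ_x(t))` for all `t ∈ [0,2]`. -/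
theorem reflLoop_Wk2 (n k : ℕ) (hk : 1 ≤ k) (x : ℝ → Cn n)
    (hx : WkPath n k x) (hbc : BC n k x) :
    WkCirc n k (reflLoop n x) ∧
    ∀ t ∈ Icc (0:ℝ) 2, reflLoop n x (2 - t) = conjCn n (reflLoop n x t) := by
  have hR : ReflectionBC (conjL n) k x := hbc.reflectionBC
  rw [reflLoop_eq_reflect]
  exact ⟨wkCirc_reflect hx hR, fun t ht =>
    reflect_two_sub _ (conjL_involutive n) (hR.map_eq hk (by simp)) (hR.map_eq hk (by simp)) ht⟩

end NLGF
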